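/- Let n ≥ 1 and define h_n : [0,1]^n → [0,1) by h_n(x) = min(1 − 2^{−(n+1)}, (2^{n+1}−1)·min_{1≤i≤n} x_i). Let k_1, …, k_{n+1} ≥ 0 be integers with k_{n+1} ≥ 1, with k_i = 0 for some 1 ≤ i ≤ n, and with k_1 + ⋯ + k_{n+1} ≤ n. Let a_j = m_j·2^{−k_j} for integers 0 ≤ m_j < 2^{k_j} (1 ≤ j ≤ n+1). Then h_n crosses the box S = ∏_{j=1}^{n+1} [a_j, a_j + 2^{−k_j}). -/

import Mathlib

open MeasureTheory

/-- `f` crosses `S ⊆ ℝ^{n+1}` if both the part of `S` strictly below the graph of `f`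
and the part strictly above it have positive Lebesgue measure. -/
def Crosses (n : ℕ) (f : (Fin n → ℝ) → ℝ) (S : Set (Fin (n + 1) → ℝ)) : Prop :=
  0 < volume (S ∩ {p | f (fun j => p j.castSucc) < p (Fin.last n)}) ∧
  0 < volume (S ∩ {p | p (Fin.last n) < f (fun j => p j.castSucc)})

/-- The function `h_n(x) = min(1 - 2^{-(n+1)}, (2^{n+1} - 1) · min_i x_i)`. -/
noncomputable def hfun (n : ℕ) (x : Fin n → ℝ) : ℝ :=
  min (1 - ((2 : ℝ) ^ (n + 1))⁻¹) (((2 : ℝ) ^ (n + 1) - 1) * ⨅ i, x i)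

/-!
For a continuous `f`, the open set `{f(x) < t}` meets the interior of a box `Q × [α, β)` as soon
as it contains the corner `(inf Q, β)` of its closure, and symmetrically `{t < f(x)}` does as soon
as it contains `(sup Q, α)`. For `h_n` the lower corner of the `x`-box has the coordinate
`a_i = 0`, so `h_n` vanishes there; every upper coordinate is at least `2^{-k_j} ≥ 2^{-n}`, where
`h_n` already takes its maximal value `1 - 2^{-(n+1)}`, which exceeds `a_{n+1} ≤ 1 - 2^{-n}`.
-/

open Set Function

theorem measure_pi_Ico_inter_pos {ι : Type*} [Fintype ι] {l u : ι → ℝ} (hlu : ∀ j, l j < u j)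
    {O : Set (ι → ℝ)} (hO : IsOpen O) {p : ι → ℝ} (hp : p ∈ univ.pi fun j => Icc (l j) (u j))
    (hpO : p ∈ O) : 0 < volume ((univ.pi fun j => Ico (l j) (u j)) ∩ O) := by
  have hclosure :
      closure (univ.pi fun j => Ioo (l j) (u j)) = univ.pi fun j => Icc (l j) (u j) := by
    simp only [closure_pi_set, closure_Ioo (hlu _).ne]
  obtain ⟨q, hqO, hq⟩ := mem_closure_iff.1 (hclosure ▸ hp) O hO hpO
  refine lt_of_lt_of_le ?_ (measure_mono (inter_subset_inter_left O
    (pi_mono fun j _ => Ioo_subset_Ico_self)))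
  exact ((isOpen_set_pi finite_univ fun _ _ => isOpen_Ioo).inter hO).measure_pos volume ⟨q, hq, hqO⟩

theorem Crosses.pi_Ico_of_continuous {n : ℕ} {f : (Fin n → ℝ) → ℝ} (hf : Continuous f)
    {l u : Fin (n + 1) → ℝ} (hlu : ∀ j, l j < u j)
    (hlow : f (fun j => l j.castSucc) < u (Fin.last n))
    (hupp : l (Fin.last n) < f (fun j => u j.castSucc)) :
    Crosses n f (univ.pi fun j => Ico (l j) (u j)) := by
  have hl : l ∈ univ.pi fun j => Icc (l j) (u j) := fun j _ => ⟨le_rfl, (hlu j).le⟩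
  have hu : u ∈ univ.pi fun j => Icc (l j) (u j) := fun j _ => ⟨(hlu j).le, le_rfl⟩
  constructor
  · exact measure_pi_Ico_inter_pos hlu (isOpen_lt (by fun_prop) (by fun_prop))
      ((update_mem_pi_iff_of_mem (i := Fin.last n) hl).2 fun _ => hu _ trivial)
      (by simpa [Fin.castSucc_ne_last] using hlow)
  · exact measure_pi_Ico_inter_pos hlu (isOpen_lt (by fun_prop) (by fun_prop))
      ((update_mem_pi_iff_of_mem (i := Fin.last n) hu).2 fun _ => hl _ trivial)
      (by simpa [Fin.castSucc_ne_last] using hupp)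

theorem continuous_hfun (n : ℕ) [Nonempty (Fin n)] : Continuous (hfun n) := by
  have hinf : Continuous fun x : Fin n → ℝ => ⨅ i, x i := by
    simp_rw [← Finset.inf'_univ_eq_ciInf]
    fun_prop
  exact continuous_const.min (continuous_const.mul hinf)

theorem hfun_nonpos {n : ℕ} {x : Fin n → ℝ} (i : Fin n) (hx : x i ≤ 0) : hfun n x ≤ 0 := by
  exact (min_le_right _ _).trans <|
    mul_nonpos_of_nonneg_of_nonpos (sub_nonneg.2 (one_le_pow₀ one_le_two)) <|
    (ciInf_le (finite_range x).bddBelow i).trans hx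

theorem hfun_eq_of_forall_le {n : ℕ} [Nonempty (Fin n)] {x : Fin n → ℝ}
    (hx : ∀ i, ((2 : ℝ) ^ (n + 1))⁻¹ ≤ x i) : hfun n x = 1 - ((2 : ℝ) ^ (n + 1))⁻¹ := by
  refine min_eq_left ?_
  calc 1 - ((2 : ℝ) ^ (n + 1))⁻¹ = ((2 : ℝ) ^ (n + 1) - 1) * ((2 : ℝ) ^ (n + 1))⁻¹ := by
        field_simp
    _ ≤ ((2 : ℝ) ^ (n + 1) - 1) * ⨅ i, x i := by
        gcongr
        · exact sub_nonneg.2 (one_le_pow₀ one_le_two)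
        · exact le_ciInf hx

theorem div_two_pow_add_inv_le_one {m k : ℕ} (hm : m < 2 ^ k) :
    (m : ℝ) / 2 ^ k + ((2 : ℝ) ^ k)⁻¹ ≤ 1 := by
  rw [inv_eq_one_div, ← add_div, div_le_one (by positivity)]
  exact_mod_cast hm

theorem inv_two_pow_succ_lt {k n : ℕ} (h : k ≤ n) : ((2 : ℝ) ^ (n + 1))⁻¹ < ((2 : ℝ) ^ k)⁻¹ :=
  inv_strictAnti₀ (by positivity) (pow_lt_pow_right₀ one_lt_two (by omega))

theorem stmt_13_general (n : ℕ) (k m : Fin (n + 1) → ℕ)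
    (hm : ∀ j, m j < 2 ^ k j)
    (hkzero : ∃ i : Fin n, k i.castSucc = 0)
    (hksum : ∑ j, k j ≤ n) :
    Crosses n (hfun n)
      (Set.univ.pi fun j : Fin (n + 1) =>
        Set.Ico ((m j : ℝ) / 2 ^ k j) ((m j : ℝ) / 2 ^ k j + ((2 : ℝ) ^ k j)⁻¹)) := by
  obtain ⟨i, hki⟩ := hkzero
  have : Nonempty (Fin n) := ⟨i⟩
  have hk : ∀ j, k j ≤ n := fun j =>
    (Finset.single_le_sum (fun _ _ => Nat.zero_le _) (Finset.mem_univ j)).trans hksum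
  refine Crosses.pi_Ico_of_continuous (continuous_hfun n)
    (fun j => lt_add_of_pos_right _ (by positivity)) ?_ ?_
  · have hmi : m i.castSucc = 0 := by simpa [hki] using hm i.castSucc
    calc hfun n _ ≤ 0 := hfun_nonpos i (by simp [hmi])
      _ < _ := by positivity
  · rw [hfun_eq_of_forall_le fun j => (inv_two_pow_succ_lt (hk _)).le.trans
      (le_add_of_nonneg_left (by positivity))]
    linarith [div_two_pow_add_inv_le_one (hm (Fin.last n)), inv_two_pow_succ_lt (hk (Fin.last n))]

theorem stmt_13 (n : ℕ) (hn : 1 ≤ n) (k m : Fin (n + 1) → ℕ)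
    (hm : ∀ j, m j < 2 ^ k j)
    (hklast : 1 ≤ k (Fin.last n))
    (hkzero : ∃ i : Fin n, k i.castSucc = 0)
    (hksum : ∑ j, k j ≤ n) :
    Crosses n (hfun n)
      (Set.univ.pi fun j : Fin (n + 1) =>
        Set.Ico ((m j : ℝ) / 2 ^ k j) ((m j : ℝ) / 2 ^ k j + ((2 : ℝ) ^ k j)⁻¹)) :=
  stmt_13_general n k m hm hkzero hksum
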